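/- arXiv:math/0110244 — 7 statements merged into one kernel-verified Lean document; each statement's English description precedes it below -/
import Mathlib

section
/- Let k be an algebraically closed field of characteristic p > 0, let q = p^e, and let V be a nonzero finite-dimensional k-vector space equipped with a q-semilinear map F : V → V (i.e. F is additive and F(c v) = c^q F(v) for all c ∈ k, v ∈ V). Then V contains a one-dimensional k-subspace W with F(W) ⊆ W. -/
open Polynomial Finset

private noncomputable def Pseq {k : Type*} [Field k] (q : ℕ) (a : ℕ → k) : ℕ → k[X]
  | 0 => C (a 0) * X ^ q
  | (i+1) => (Pseq q a i) ^ q + C (a (i+1)) * X ^ q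

private lemma Pseq_natDegree {k : Type*} [Field k] (q : ℕ) (hq : 2 ≤ q) (a : ℕ → k)
    (ha : a 0 ≠ 0) (i : ℕ) : (Pseq q a i).natDegree = q ^ (i + 1) := by
  induction i with
  | zero => simpa [Pseq] using natDegree_C_mul_X_pow q (a 0) ha
  | succ i ih =>
      have hpow : ((Pseq q a i) ^ q).natDegree = q ^ (i + 2) := by
        rw [natDegree_pow, ih]; ring
      have hle : (C (a (i+1)) * X ^ q).natDegree < ((Pseq q a i) ^ q).natDegree := by
        rw [hpow]
        calc (C (a (i+1)) * X ^ q).natDegree ≤ q := by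
              simpa using (natDegree_C_mul_le (a (i+1)) (X ^ q)).trans (by simp)
          _ < q ^ (i + 2) := by
              calc q = q ^ 1 := (pow_one q).symm
                _ < q ^ (i + 2) := by
                    exact Nat.pow_lt_pow_right (by omega) (by omega)
      rw [Pseq, natDegree_add_eq_left_of_natDegree_lt hle, hpow]

private lemma Pseq_eval_zero {k : Type*} [Field k] (q : ℕ) (hq : 2 ≤ q) (a : ℕ → k) (i : ℕ) :
    (Pseq q a i).eval 0 = 0 := by
  induction i with
  | zero => simp [Pseq, zero_pow (by omega : q ≠ 0)]
  | succ i ih => simp [Pseq, ih, zero_pow (by omega : q ≠ 0)]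

private lemma Pseq_derivative {k : Type*} [Field k] (q : ℕ) (hqk : (q : k) = 0) (a : ℕ → k)
    (i : ℕ) : derivative (Pseq q a i) = 0 := by
  induction i with
  | zero => simp [Pseq, derivative_X_pow, hqk]
  | succ i ih => simp [Pseq, derivative_pow, ih, derivative_X_pow, hqk]

private lemma exists_root_seq {k : Type*} [Field k] [IsAlgClosed k] (q : ℕ) (hq : 2 ≤ q)
    (hqk : (q : k) = 0) (a : ℕ → k) (ha : a 0 ≠ 0) (m : ℕ) :
    ∃ (t : k) (c : ℕ → k), t ≠ 0 ∧ c m = t ∧ c 0 = a 0 * t ^ q ∧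
      ∀ i, c (i + 1) = (c i) ^ q + a (i + 1) * t ^ q := by
  set f : k[X] := Pseq q a m - X with hf
  have hdeg : f.natDegree = q ^ (m + 1) := by
    have h1 : (X : k[X]).natDegree < (Pseq q a m).natDegree := by
      rw [Pseq_natDegree q hq a ha, natDegree_X]
      calc 1 < q := hq
        _ = q ^ 1 := (pow_one q).symm
        _ ≤ q ^ (m + 1) := Nat.pow_le_pow_right (by omega) (by omega)
    rw [hf, sub_eq_add_neg, natDegree_add_eq_left_of_natDegree_lt (by simpa using h1),
      Pseq_natDegree q hq a ha]
  have hdeg2 : 2 ≤ f.natDegree := by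
    rw [hdeg]
    calc 2 ≤ q := hq
      _ = q ^ 1 := (pow_one q).symm
      _ ≤ q ^ (m + 1) := Nat.pow_le_pow_right (by omega) (by omega)
  have hf0 : f ≠ 0 := fun h => by simp [h] at hdeg2
  have hderiv : derivative f = -1 := by
    rw [hf, derivative_sub, Pseq_derivative q hqk a, derivative_X]; ring
  have hsep : f.Separable := by
    rw [separable_def, hderiv]
    exact ⟨0, -1, by ring⟩
  have hcard : Fintype.card (f.rootSet k) = f.natDegree :=
    card_rootSet_eq_natDegree hsep (IsAlgClosed.splits _)
  have hzero : (0 : k) ∈ f.rootSet k := by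
    rw [mem_rootSet]
    refine ⟨hf0, ?_⟩
    simp [hf, Pseq_eval_zero q hq a m]
  obtain ⟨t, ht, htne⟩ : ∃ t ∈ f.rootSet k, t ≠ 0 := by
    by_contra h
    push_neg at h
    have : Fintype.card (f.rootSet k) ≤ 1 := by
      rw [Fintype.card_le_one_iff]
      rintro ⟨x, hx⟩ ⟨y, hy⟩
      simp [Subtype.ext_iff, h x hx, h y hy]
    omega
  have htroot : (Pseq q a m).eval t = t := by
    rw [mem_rootSet] at ht
    have := ht.2
    rw [aeval_def] at this
    simp only [hf] at this
    have : f.eval t = 0 := by simpa [hf] using ht.2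
    rw [hf] at this
    simp only [eval_sub, eval_X, sub_eq_zero] at this
    exact this
  refine ⟨t, fun i => (Pseq q a i).eval t, htne, htroot, by simp [Pseq], fun i => by simp [Pseq]⟩

private lemma exists_semilinear_eigen {k : Type*} [Field k] [IsAlgClosed k]
    {V : Type*} [AddCommGroup V] [Module k V]
    (q : ℕ) (hq : 2 ≤ q) (hqk : (q : k) = 0)
    (F : V →+ V) (hF : ∀ (c : k) (v : V), F (c • v) = c ^ q • F v)
    (m : ℕ) (v : V)
    (hind : LinearIndependent k fun i : Fin (m + 1) => F^[(i : ℕ)] v)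
    (hmem : F^[m + 1] v ∈ Submodule.span k (Set.range fun i : Fin (m + 1) => F^[(i : ℕ)] v)) :
    ∃ w : V, w ≠ 0 ∧ ∃ μ : k, F w = μ • w := by
  classical
  obtain ⟨a, ha⟩ := (Submodule.mem_span_range_iff_exists_fun k).mp hmem
  set a' : ℕ → k := fun i => if h : i < m + 1 then a ⟨i, h⟩ else 0 with ha'
  have hsum : ∀ c : ℕ → k,
      (∑ i : Fin (m + 1), c (i : ℕ) • F^[(i : ℕ)] v) = ∑ i ∈ range (m + 1), c i • F^[i] v :=
    fun c => Fin.sum_univ_eq_sum_range (fun i => c i • F^[i] v) (m + 1)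
  have ha2 : ∑ i ∈ range (m + 1), a' i • F^[i] v = F^[m + 1] v := by
    rw [← hsum (fun i => a' i)]
    rw [← ha]
    apply Finset.sum_congr rfl
    intro i _
    simp [ha', i.isLt, Fin.is_le]
  -- coefficients of a vanishing combination are zero
  have hcoef : ∀ c : ℕ → k, (∑ i ∈ range (m + 1), c i • F^[i] v) = 0 → ∀ i < m + 1, c i = 0 := by
    intro c hc i hi
    have := Fintype.linearIndependent_iff.mp hind (fun i : Fin (m + 1) => c (i : ℕ))
      (by rw [hsum c]; exact hc) ⟨i, hi⟩
    exact this
  -- action of F on a combination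
  have hFsum : ∀ c : ℕ → k,
      F (∑ i ∈ range (m + 1), c i • F^[i] v)
        = ∑ i ∈ range (m + 1), (c i) ^ q • F^[i + 1] v := by
    intro c
    rw [map_sum]
    apply Finset.sum_congr rfl
    intro i _
    rw [hF, Function.iterate_succ_apply']
  by_cases h0 : a' 0 = 0
  · -- kernel case: F w = 0
    have hb : ∀ i : ℕ, ∃ x : k, x ^ q = -(a' (i + 1)) :=
      fun i => IsAlgClosed.exists_pow_nat_eq _ (by omega)
    choose b hbq using hb
    set c : ℕ → k := fun i => if i = m then 1 else b i with hc
    refine ⟨∑ i ∈ range (m + 1), c i • F^[i] v, ?_, 0, ?_⟩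
    · intro hw
      have := hcoef c hw m (by omega)
      simp [hc] at this
    · rw [hFsum, Finset.sum_range_succ]
      have hterm : (c m) ^ q • F^[m + 1] v = ∑ i ∈ range (m + 1), a' i • F^[i] v := by
        simp [hc, ha2]
      rw [hterm, Finset.sum_range_succ' (fun i => a' i • F^[i] v) m, h0]
      have hrest : ∀ i ∈ range m, (c i) ^ q • F^[i + 1] v = -(a' (i + 1) • F^[i + 1] v) := by
        intro i hi
        have : i ≠ m := by simp at hi; omega
        rw [hc]
        simp only [if_neg this, hbq, neg_smul]
      rw [Finset.sum_congr rfl hrest]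
      simp
  · -- eigenvector case: F w = w
    obtain ⟨t, c, ht, hcm, hc0, hcs⟩ := exists_root_seq q hq hqk a' h0 m
    refine ⟨∑ i ∈ range (m + 1), c i • F^[i] v, ?_, 1, ?_⟩
    · intro hw
      exact ht (hcm ▸ hcoef c hw m (by omega))
    · rw [hFsum, Finset.sum_range_succ, one_smul]
      have hterm : (c m) ^ q • F^[m + 1] v
          = ∑ i ∈ range (m + 1), (t ^ q * a' i) • F^[i] v := by
        rw [hcm, ← ha2, Finset.smul_sum]
        apply Finset.sum_congr rfl
        intro i _
        rw [smul_smul]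
      rw [hterm, Finset.sum_range_succ' (fun i => (t ^ q * a' i) • F^[i] v) m,
        Finset.sum_range_succ' (fun i => c i • F^[i] v) m, ← add_assoc,
        ← Finset.sum_add_distrib]
      congr 1
      · apply Finset.sum_congr rfl
        intro i _
        rw [← add_smul, hcs i, mul_comm]
      · rw [hc0, mul_comm]

/-- If `k` is an algebraically closed field of characteristic `p > 0`, `q = p ^ e`, and
`V` is a nonzero finite-dimensional `k`-vector space with a `q`-semilinear map `F : V → V`
(additive with `F (c • v) = c ^ q • F v`), then `V` contains a one-dimensional
`F`-stable `k`-subspace. -/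
theorem stmt0 (k : Type*) [Field k] [IsAlgClosed k] (p : ℕ) [Fact p.Prime] [CharP k p]
    (e : ℕ) (he : 1 ≤ e)
    (V : Type*) [AddCommGroup V] [Module k V] [FiniteDimensional k V] [Nontrivial V]
    (F : V →+ V) (hF : ∀ (c : k) (v : V), F (c • v) = c ^ (p ^ e) • F v) :
    ∃ W : Submodule k V, Module.finrank k W = 1 ∧ ∀ v ∈ W, F v ∈ W := by
  classical
  set q : ℕ := p ^ e with hqdef
  have hp2 : 2 ≤ p := (Fact.out : p.Prime).two_le
  have hq : 2 ≤ q := le_trans hp2 (Nat.le_self_pow (by omega) p)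
  have hqk : (q : k) = 0 := by
    rw [hqdef]
    push_cast
    rw [CharP.cast_eq_zero k p]
    exact zero_pow (by omega)
  obtain ⟨v, hv⟩ := exists_ne (0 : V)
  have hex : ∃ j, ¬ LinearIndependent k fun i : Fin j => F^[(i : ℕ)] v := by
    refine ⟨Module.finrank k V + 1, fun h => ?_⟩
    have := h.fintype_card_le_finrank
    simp [Fintype.card_fin] at this
  obtain ⟨n, hQn, hmin⟩ : ∃ n : ℕ, (¬ LinearIndependent k fun i : Fin n => F^[(i : ℕ)] v) ∧
      ∀ j < n, LinearIndependent k fun i : Fin j => F^[(i : ℕ)] v := by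
    refine ⟨Nat.find hex, Nat.find_spec hex, fun j hj => ?_⟩
    by_contra hc
    exact Nat.find_min hex hj hc
  have hn2 : 2 ≤ n := by
    rcases Nat.lt_or_ge n 2 with h | h
    · interval_cases n
      · exact absurd linearIndependent_empty_type hQn
      · refine absurd ?_ hQn
        refine linearIndependent_unique_iff.mpr ?_
        simpa using hv
    · exact h
  obtain ⟨m, rfl⟩ : ∃ m, n = m + 2 := ⟨n - 2, by omega⟩
  have hind : LinearIndependent k fun i : Fin (m + 1) => F^[(i : ℕ)] v :=
    hmin (m + 1) (by omega)
  have heq : (fun i : Fin (m + 2) => F^[(i : ℕ)] v)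
      = Fin.snoc (fun i : Fin (m + 1) => F^[(i : ℕ)] v) (F^[m + 1] v) := by
    funext i
    refine Fin.lastCases ?_ ?_ i
    · simp
    · intro j
      simp
  rw [heq, linearIndependent_fin_snoc] at hQn
  push_neg at hQn
  have hmem : F^[m + 1] v ∈ Submodule.span k (Set.range fun i : Fin (m + 1) => F^[(i : ℕ)] v) :=
    hQn hind
  obtain ⟨w, hw, μ, hFw⟩ :=
    exists_semilinear_eigen q hq hqk F hF m v hind hmem
  refine ⟨Submodule.span k {w}, finrank_span_singleton hw, ?_⟩
  intro x hx
  obtain ⟨c, rfl⟩ := Submodule.mem_span_singleton.mp hx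
  rw [hF, hFw, smul_smul]
  exact Submodule.smul_mem _ _ (Submodule.mem_span_singleton_self w)
end

section
/- Let k be a field and D a division ring containing k in its center. Suppose the cardinality of k (as a set) is strictly greater than the dimension of D as a k-vector space (e.g. k uncountable and D of countable dimension). Then every element of D is algebraic over k. -/
/-!
If `x ∈ D` were transcendental over `k`, then `x - a ≠ 0` for every `a : k` and the elements
`(x - a)⁻¹`, `a : k`, would be `k`-linearly independent: clearing denominators in a relation
`∑ mⱼ (x - aⱼ)⁻¹ = 0` by `∏ (x - aⱼ)` yields a polynomial relation for `x`, which forces all `mⱼ`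
to vanish. This gives `#k` independent vectors in a space of dimension `< #k`.
-/

open Polynomial

namespace Lagrange

variable {R ι : Type*} [CommRing R] [IsDomain R] [DecidableEq ι]

theorem eq_zero_of_sum_C_mul_nodal_erase_eq_zero {s : Finset ι} {v : ι → R}
    (hvs : Set.InjOn v s) {m : ι → R} (hm : ∑ j ∈ s, C (m j) * nodal (s.erase j) v = 0)
    {i : ι} (hi : i ∈ s) : m i = 0 := by
  have hother : ∀ j ∈ s, j ≠ i → m j * eval (v i) (nodal (s.erase j) v) = 0 := fun j _ hji ↦ by
    rw [eval_nodal_at_node (Finset.mem_erase.mpr ⟨hji.symm, hi⟩), mul_zero]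
  have hnode : eval (v i) (nodal (s.erase i) v) ≠ 0 := eval_nodal_not_at_node fun l hl ↦
    fun h ↦ Finset.ne_of_mem_erase hl (hvs (Finset.mem_of_mem_erase hl) hi h.symm)
  have heval := congrArg (eval (v i)) hm
  simp only [eval_finsetSum, eval_mul, eval_C, eval_zero] at heval
  rw [Finset.sum_eq_single_of_mem i hi hother] at heval
  exact (mul_eq_zero.mp heval).resolve_right hnode

end Lagrange

section DivisionRing

open Lagrange

variable {k D : Type*} [Field k] [DivisionRing D] [Algebra k D] {x : D}

theorem Transcendental.sub_algebraMap_ne_zero (hx : Transcendental k x) (a : k) :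
    x - algebraMap k D a ≠ 0 := fun h ↦
  X_sub_C_ne_zero a <| transcendental_iff.mp hx (X - C a) (by simp [h])

theorem Transcendental.linearIndependent_sub_inv_of_divisionRing (hx : Transcendental k x) :
    LinearIndependent k fun a ↦ (x - algebraMap k D a)⁻¹ := by
  classical
  refine linearIndependent_iff'.mpr fun s m hm i hi ↦ ?_
  -- `D` need not be commutative, so the product of the `x - a` is formed in `k[X]` and evaluated.
  have hclear : ∀ j ∈ s, (x - algebraMap k D j)⁻¹ * Polynomial.aeval x (nodal s id) =
      Polynomial.aeval x (nodal (s.erase j) id) := fun j hj ↦ by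
    rw [nodal_eq_mul_nodal_erase hj, map_mul]
    simpa using inv_mul_cancel_left₀ (hx.sub_algebraMap_ne_zero j) _
  have hrel : Polynomial.aeval x (∑ j ∈ s, C (m j) * nodal (s.erase j) id) = 0 := by
    calc Polynomial.aeval x (∑ j ∈ s, C (m j) * nodal (s.erase j) id)
        = (∑ j ∈ s, m j • (x - algebraMap k D j)⁻¹) * Polynomial.aeval x (nodal s id) := by
          simp only [map_sum, Finset.sum_mul, smul_mul_assoc]
          refine Finset.sum_congr rfl fun j hj ↦ ?_
          rw [hclear j hj, map_mul, aeval_C, Algebra.smul_def]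
      _ = 0 := by rw [hm, zero_mul]
  exact eq_zero_of_sum_C_mul_nodal_erase_eq_zero (Set.injOn_id _)
    (transcendental_iff.mp hx _ hrel) hi

end DivisionRing

/-- If `D` is a division ring containing the field `k` in its center and the cardinality of `k`
is strictly greater than the `k`-dimension of `D`, then every element of `D` is algebraic
over `k`. -/
theorem stmt2 (k D : Type u) [Field k] [DivisionRing D] [Algebra k D]
    (h : Module.rank k D < Cardinal.mk k) :
    ∀ x : D, IsAlgebraic k x := fun x ↦ by
  by_contra hx
  exact h.not_ge (Transcendental.linearIndependent_sub_inv_of_divisionRing hx).cardinal_le_rank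
end

section
/- Let k be a perfect field of characteristic p > 0 and q = p^e with e ≥ 1. There is no polynomial β ∈ k[x] satisfying β^{q+1} + x^{p^t} β − 1 = 0 in k[x], for any t ≥ 0, provided that when t > 0 the polynomial β is not a p-th power in k[x]. Consequently, the equation α^{q+1} + x α − 1 = 0 has no solution α in the perfect closure k[x]^{1/p^∞} of k[x]. -/
/-!
Both equations say that the unknown is a unit: `β * (β ^ q + x ^ (p ^ t)) = 1`. Units of `k[x]`
are constants, and a constant `c` solving `c ^ (q + 1) + x ^ (p ^ t) * c = 1` has `c = 0` by
comparing coefficients of `x ^ (p ^ t)`. A solution `α` in the perfect closure has some power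
`α ^ (p ^ t) = β` in `k[x]`, and applying the `t`-th power of Frobenius to its equation shows
that `β` solves the first equation.
-/

open Polynomial

theorem Polynomial.pow_succ_add_X_pow_mul_ne_one {R : Type*} [CommRing R] [IsDomain R]
    {n m : ℕ} (hm : m ≠ 0) (β : R[X]) : β ^ (n + 1) + X ^ m * β ≠ 1 := by
  intro h
  have hunit : IsUnit β := .of_mul_eq_one (β ^ n + X ^ m) (by rw [← h]; ring)
  obtain ⟨c, hc, rfl⟩ := Polynomial.isUnit_iff.mp hunit
  have hcoeff := congrArg (coeff · m) h
  simp only [← C_pow, coeff_add, coeff_C, hm, if_false, coeff_X_pow_mul', le_refl, if_true,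
    Nat.sub_self, coeff_one] at hcoeff
  exact hc.ne_zero (by simpa using hcoeff)

theorem IsPRadical.exists_pow_succ_add_pow_mul_eq_one {K L : Type*} [CommRing K] [CommRing L]
    (i : K →+* L) (p : ℕ) [ExpChar L p] [IsPRadical i p] (hi : Function.Injective i)
    {n : ℕ} {x : K} {α : L} (h : α ^ (n + 1) + i x * α = 1) :
    ∃ (t : ℕ) (β : K), β ^ (n + 1) + x ^ (p ^ t) * β = 1 := by
  obtain ⟨t, β, hβ⟩ := IsPRadical.pow_mem i p α
  refine ⟨t, β, hi ?_⟩
  have hfrob := congrArg (iterateFrobenius L p t) h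
  simp only [map_add, map_mul, map_pow, map_one, iterateFrobenius_def] at hfrob
  rw [map_add, map_mul, map_pow, map_pow, map_one, hβ, ← hfrob]

theorem PerfectClosure.of_injective (K : Type*) [CommRing K] [IsReduced K] (p : ℕ)
    [Fact p.Prime] [CharP K p] : Function.Injective (PerfectClosure.of K p) := fun x y h => by
  simpa using (PerfectClosure.eq_iff K p (0, x) (0, y)).mp h

theorem stmt6_general (k : Type*) [Field k] (p : ℕ) [Fact p.Prime] [CharP k p]
    (e : ℕ) :
    (∀ (t : ℕ) (β : Polynomial k), (0 < t → ∀ γ : Polynomial k, β ≠ γ ^ p) →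
        β ^ (p ^ e + 1) + X ^ (p ^ t) * β - 1 ≠ 0) ∧
    (∀ α : PerfectClosure (Polynomial k) p,
        α ^ (p ^ e + 1) + PerfectClosure.of (Polynomial k) p X * α - 1 ≠ 0) := by
  have hpow (t : ℕ) : p ^ t ≠ 0 := pow_ne_zero t (Fact.out : p.Prime).ne_zero
  refine ⟨fun t β _ h => pow_succ_add_X_pow_mul_ne_one (hpow t) β (sub_eq_zero.mp h),
    fun α h => ?_⟩
  obtain ⟨t, β, hβ⟩ := IsPRadical.exists_pow_succ_add_pow_mul_eq_one _ p
    (PerfectClosure.of_injective _ p) (sub_eq_zero.mp h)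
  exact pow_succ_add_X_pow_mul_ne_one (hpow t) β hβ

/-- Let `k` be a perfect field of characteristic `p > 0` and `q = p ^ e`, `e ≥ 1`.
(1) There is no polynomial `β ∈ k[x]` with `β^(q+1) + x^(p^t) * β - 1 = 0` (for any `t ≥ 0`,
provided `β` is not a `p`-th power when `t > 0`).
(2) Consequently, `α^(q+1) + x * α - 1 = 0` has no solution `α` in the perfect closure
`k[x]^{1/p^∞}` of `k[x]`. -/
theorem stmt6 (k : Type*) [Field k] (p : ℕ) [Fact p.Prime] [CharP k p] [PerfectRing k p]
    (e : ℕ) (he : 1 ≤ e) :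
    (∀ (t : ℕ) (β : Polynomial k), (0 < t → ∀ γ : Polynomial k, β ≠ γ ^ p) →
        β ^ (p ^ e + 1) + X ^ (p ^ t) * β - 1 ≠ 0) ∧
    (∀ α : PerfectClosure (Polynomial k) p,
        α ^ (p ^ e + 1) + PerfectClosure.of (Polynomial k) p X * α - 1 ≠ 0) :=
  stmt6_general k p e
end

section
/- Let R be a commutative ring of characteristic p > 0, q = p^e, and let M be an R-module with a q-semilinear map F : M → M whose R-linear extension θ : R ⊗_{F} M → M is surjective (i.e. M equals the R-submodule F(M) generated by the image of F). Suppose M is finitely generated as a module over the twisted polynomial ring R[F] (equivalently, M = Σ_{n≥0} F^n(M') for some finitely generated R-submodule M'). Then there exists a finitely generated R-submodule M_0 ⊆ M such that M_0 ⊆ F(M_0) and M = ⋃_{n≥0} F^n(M_0), where F^n(N) denotes the R-submodule generated by {F^n(x) : x ∈ N}. -/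
/-- For a `q`-semilinear map `F` on an `R`-module `M` and an `R`-submodule `N`, the submodule
`F(N)` generated by the image of `N` under `F`. -/
def fSub (R : Type*) {M : Type*} [CommRing R] [AddCommGroup M] [Module R M]
    (F : M →+ M) (N : Submodule R M) : Submodule R M :=
  Submodule.span R (⇑F '' (N : Set M))

section Aux

variable {R M : Type*} [CommRing R] [AddCommGroup M] [Module R M] (F : M →+ M)

lemma fSub_mono {A B : Submodule R M} (h : A ≤ B) : fSub R F A ≤ fSub R F B :=
  Submodule.span_mono (Set.image_mono h)

lemma fSub_iter_mono (n : ℕ) {A B : Submodule R M} (h : A ≤ B) :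
    (fSub R F)^[n] A ≤ (fSub R F)^[n] B := by
  induction n generalizing A B with
  | zero => exact h
  | succ k ih =>
    rw [Function.iterate_succ_apply', Function.iterate_succ_apply']
    exact fSub_mono F (ih h)

lemma fSub_iSup_le {ι : Sort*} (f : ι → Submodule R M) :
    fSub R F (⨆ i, f i) ≤ ⨆ i, fSub R F (f i) := by
  rw [fSub, Submodule.span_le]
  rintro _ ⟨x, hx, rfl⟩
  refine Submodule.iSup_induction (motive := fun y => F y ∈ ⨆ i, fSub R F (f i)) f hx
    (fun i y hy => ?_) (by simp)
    (fun a b ha hb => by simpa only [map_add] using add_mem ha hb)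
  exact le_iSup (fun i => fSub R F (f i)) i (Submodule.subset_span ⟨y, hy, rfl⟩)

lemma fSub_fg {k : ℕ} (hF : ∀ (r : R) (m : M), F (r • m) = r ^ k • F m)
    {N : Submodule R M} (hN : N.FG) : (fSub R F N).FG := by
  obtain ⟨s, rfl⟩ := hN
  have : fSub R F (Submodule.span R (s : Set M)) = Submodule.span R (⇑F '' (s : Set M)) := by
    refine le_antisymm ?_ ?_
    · rw [fSub, Submodule.span_le]
      rintro _ ⟨x, hx, rfl⟩
      induction hx using Submodule.span_induction with
      | mem y hy => exact Submodule.subset_span ⟨y, hy, rfl⟩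
      | zero => simp
      | add a b _ _ ha hb => rw [map_add]; exact add_mem ha hb
      | smul r a _ ha => rw [hF]; exact Submodule.smul_mem _ _ ha
    · exact Submodule.span_mono (Set.image_mono Submodule.subset_span)
  rw [this]
  exact Submodule.fg_span (s.finite_toSet.image _)

end Aux

/-- Let `R` be commutative of characteristic `p > 0`, `q = p ^ e`, and `M` an `R`-module with a
`q`-semilinear map `F : M → M` such that `M` is `F`-full (the submodule generated by the image
of `F` is all of `M`) and `M` is finitely generated over `R[F]` (i.e. `M = Σ_n F^n(M')` for
some finitely generated `R`-submodule `M'`).  Then there is a finitely generated `R`-submodule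
`M₀ ⊆ M` with `M₀ ⊆ F(M₀)` and `M = ⋃_n F^n(M₀)`. -/
theorem stmt10 (R : Type*) [CommRing R] (p : ℕ) [Fact p.Prime] [CharP R p] (e : ℕ) (he : 1 ≤ e)
    (M : Type*) [AddCommGroup M] [Module R M]
    (F : M →+ M) (hF : ∀ (r : R) (m : M), F (r • m) = r ^ (p ^ e) • F m)
    (hfull : fSub R F ⊤ = ⊤)
    (hfg : ∃ M' : Submodule R M, M'.FG ∧ (⨆ n : ℕ, (fSub R F)^[n] M') = ⊤) :
    ∃ M₀ : Submodule R M, M₀.FG ∧ M₀ ≤ fSub R F M₀ ∧ (⨆ n : ℕ, (fSub R F)^[n] M₀) = ⊤ := by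
  classical
  obtain ⟨M', hM'fg, hM'top⟩ := hfg
  set G : ℕ → Submodule R M := fun n => (fSub R F)^[n] M' with hG
  -- Step 1: M' ≤ ⨆ n, fSub^[n+1] M'
  have hshift : M' ≤ ⨆ n : ℕ, G (n + 1) := by
    have h1 : (⊤ : Submodule R M) ≤ ⨆ n : ℕ, G (n + 1) := by
      rw [← hfull]
      conv_lhs => rw [← hM'top]
      refine (fSub_iSup_le F G).trans (iSup_le fun n => ?_)
      have : fSub R F (G n) = G (n + 1) := (Function.iterate_succ_apply' (fSub R F) n M').symm
      rw [this]
      exact le_iSup (fun n => G (n + 1)) n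
    exact le_trans le_top h1
  -- Step 2: compactness of M'
  have hc := (Submodule.fg_iff_compact M').mp hM'fg
  obtain ⟨t, ht⟩ := (CompleteLattice.isCompactElement_iff_exists_le_iSup_of_le_iSup M').mp hc (ULift ℕ)
    (fun i => G (i.down + 1))
    (hshift.trans (iSup_le fun n => le_iSup (fun i : ULift ℕ => G (i.down + 1)) ⟨n⟩))
  set N : ℕ := t.sup fun i => i.down with hN
  set M₀ : Submodule R M := (Finset.range (N + 1)).sup G with hM₀
  have hGle : ∀ k, k ≤ N → G k ≤ M₀ :=
    fun k hk => Finset.le_sup (Finset.mem_range.mpr (Nat.lt_succ_of_le hk))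
  have hM'M₀ : M' ≤ M₀ := hGle 0 (Nat.zero_le N)
  have hM'fsub : M' ≤ fSub R F M₀ := by
    refine ht.trans (Finset.sup_le fun i hi => ?_)
    have : G (i.down + 1) = fSub R F (G i.down) := Function.iterate_succ_apply' (fSub R F) _ M'
    rw [this]
    exact fSub_mono F (hGle i.down (Finset.le_sup (f := fun i : ULift ℕ => i.down) hi))
  refine ⟨M₀, ?_, ?_, ?_⟩
  · have hGfg : ∀ k, (G k).FG := by
      intro k
      induction k with
      | zero => exact hM'fg
      | succ k ih =>
        have h : G (k + 1) = fSub R F (G k) := Function.iterate_succ_apply' (fSub R F) _ M'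
        rw [h]
        exact fSub_fg F hF ih
    exact Submodule.fg_finset_sup _ _ fun i _ => hGfg i
  · refine Finset.sup_le fun k hk => ?_
    match k with
    | 0 => exact hM'fsub
    | Nat.succ m =>
      have : G (m + 1) = fSub R F (G m) := Function.iterate_succ_apply' (fSub R F) _ M'
      rw [this]
      exact fSub_mono F (hGle m (Nat.le_of_succ_le (Nat.lt_succ_iff.mp
        (Finset.mem_range.mp hk))))
  · refine top_unique ?_
    rw [← hM'top]
    exact iSup_le fun n => (fSub_iter_mono F n hM'M₀).trans
      (le_iSup (fun n => (fSub R F)^[n] M₀) n)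
end

section
/- Let M be a module over a commutative ring R of characteristic p, with a q-semilinear map F : M → M (q = p^e) such that the operation N ↦ F(N) on R-submodules (the submodule generated by the image) commutes with finite intersections. Suppose M_1, M_2 are R-submodules with M_i ⊆ F(M_i), M = ⋃_r F^r(M_i) for i = 1, 2, and M_2 finitely generated as an R-module. Then M_1 ∩ M_2 also satisfies M_1 ∩ M_2 ⊆ F(M_1 ∩ M_2) and M = ⋃_r F^r(M_1 ∩ M_2). (That is, the intersection of two roots of a unit R[F]-module is again a root.) -/
/-!
Everything happens in the lattice of submodules. Since `F(-)` preserves `⊓`, so do its iterates,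
so `F^r(M₁ ⊓ M₂) = F^r(M₁) ⊓ F^r(M₂)`. The condition `Mᵢ ⊆ F(Mᵢ)` makes both chains `F^r(Mᵢ)`
increasing, and in the compactly generated lattice of submodules `⊓` commutes with suprema of
increasing chains, so `⋃_r F^r(M₁ ⊓ M₂) = M ∩ M = M`.
-/

open Function

theorem IsCompactlyGenerated.iSup_inf_of_monotone {α ι : Type*} [CompleteLattice α]
    [IsCompactlyGenerated α] [Preorder ι] [IsDirectedOrder ι] {f g : ι → α}
    (hf : Monotone f) (hg : Monotone g) : ⨆ i, f i ⊓ g i = (⨆ i, f i) ⊓ ⨆ i, g i := by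
  refine (le_iSup_inf_iSup f g).antisymm ?_
  rw [hf.directed_le.iSup_inf_eq]
  refine iSup_le fun i => ?_
  rw [hg.directed_le.inf_iSup_eq]
  refine iSup_le fun j => ?_
  obtain ⟨k, hik, hjk⟩ := directed_of (· ≤ ·) i j
  exact (inf_le_inf (hf hik) (hg hjk)).trans (le_iSup (fun k => f k ⊓ g k) k)

theorem iSup_iterate_inf_of_semiconj₂_inf {α : Type*} [CompleteLattice α]
    [IsCompactlyGenerated α] {f : α → α} (hf : Semiconj₂ f (· ⊓ ·) (· ⊓ ·)) {a b : α}
    (ha : a ≤ f a) (hb : b ≤ f b) :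
    ⨆ n, f^[n] (a ⊓ b) = (⨆ n, f^[n] a) ⊓ ⨆ n, f^[n] b := by
  have hmono : Monotone f := Monotone.of_map_inf hf
  simp only [fun n => (hf.iterate n).eq a b]
  exact IsCompactlyGenerated.iSup_inf_of_monotone
    (hmono.monotone_iterate_of_le_map ha) (hmono.monotone_iterate_of_le_map hb)

theorem stmt11_general (R : Type*) [CommRing R]
    (M : Type*) [AddCommGroup M] [Module R M]
    (F : M →+ M)
    (hcomm : ∀ N N' : Submodule R M, fSub R F (N ⊓ N') = fSub R F N ⊓ fSub R F N')
    (M₁ M₂ : Submodule R M)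
    (h₁ : M₁ ≤ fSub R F M₁) (h₁' : (⨆ r : ℕ, (fSub R F)^[r] M₁) = ⊤)
    (h₂ : M₂ ≤ fSub R F M₂) (h₂' : (⨆ r : ℕ, (fSub R F)^[r] M₂) = ⊤) :
    M₁ ⊓ M₂ ≤ fSub R F (M₁ ⊓ M₂) ∧ (⨆ r : ℕ, (fSub R F)^[r] (M₁ ⊓ M₂)) = ⊤ := by
  refine ⟨hcomm M₁ M₂ ▸ inf_le_inf h₁ h₂, ?_⟩
  rw [iSup_iterate_inf_of_semiconj₂_inf hcomm h₁ h₂, h₁', h₂', inf_top_eq]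

/-- Let `M` be a module over a commutative ring `R` of characteristic `p`, with a
`q`-semilinear map `F : M → M` (`q = p ^ e`) such that `N ↦ F(N)` commutes with finite
intersections of submodules.  If `M₁, M₂` are roots of `M` (i.e. `Mᵢ ⊆ F(Mᵢ)` and
`M = ⋃_r F^r(Mᵢ)`), with `M₂` finitely generated, then `M₁ ⊓ M₂` is again a root of `M`. -/
theorem stmt11 (R : Type*) [CommRing R] (p : ℕ) [Fact p.Prime] [CharP R p] (e : ℕ) (he : 1 ≤ e)
    (M : Type*) [AddCommGroup M] [Module R M]
    (F : M →+ M) (hF : ∀ (r : R) (m : M), F (r • m) = r ^ (p ^ e) • F m)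
    (hcomm : ∀ N N' : Submodule R M, fSub R F (N ⊓ N') = fSub R F N ⊓ fSub R F N')
    (M₁ M₂ : Submodule R M)
    (h₁ : M₁ ≤ fSub R F M₁) (h₁' : (⨆ r : ℕ, (fSub R F)^[r] M₁) = ⊤)
    (h₂ : M₂ ≤ fSub R F M₂) (h₂' : (⨆ r : ℕ, (fSub R F)^[r] M₂) = ⊤)
    (h₂fg : M₂.FG) :
    M₁ ⊓ M₂ ≤ fSub R F (M₁ ⊓ M₂) ∧ (⨆ r : ℕ, (fSub R F)^[r] (M₁ ⊓ M₂)) = ⊤ :=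
  stmt11_general R M F hcomm M₁ M₂ h₁ h₁' h₂ h₂'
end

section
/- Let (R, m) be a complete local noetherian ring and M a finitely generated R-module. Let 𝒩 be a nonempty collection of submodules of M closed under finite intersections, and let N = ⋂_{N' ∈ 𝒩} N'. Then for every s ∈ ℕ there exists N' ∈ 𝒩 with N' ⊆ N + m^s M. -/
/-!
Put `F t = ⋂_{N' ∈ 𝒩} (N' + mᵗM)`. Since `M/mᵗM` has finite length and `𝒩` is closed under
intersections, `F t = P + mᵗM` for some `P ∈ 𝒩` (one minimal modulo `mᵗM`); this gives
`F t = F (t+1) + mᵗM`. Starting from `x ∈ F s` one then picks `xₜ ∈ F t` with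
`xₜ - xₜ₊₁ ∈ mᵗM`; by completeness the `xₜ` converge to some `L ∈ ⋂ₜ F t`, and `x - L ∈ mˢM`.
Finally `⋂ₜ F t = ⋂ 𝒩` by Krull's intersection theorem applied to each `M/N'`.
-/

open IsLocalRing Submodule

namespace IsLocalRing

variable {R : Type*} [CommRing R] [IsNoetherianRing R] [IsLocalRing R]

theorem isArtinianRing_quotient_maximalIdeal_pow (t : ℕ) :
    IsArtinianRing (R ⧸ maximalIdeal R ^ t) := by
  rw [isArtinianRing_iff_krullDimLE_zero,
    Ideal.krullDimLE_zero_quotient_iff_forall_minimalPrimes_isMaximal]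
  intro J hJ
  have hJm : J = maximalIdeal R :=
    le_antisymm (le_maximalIdeal hJ.1.1.ne_top) (hJ.1.1.le_of_pow_le hJ.1.2)
  exact hJm ▸ maximalIdeal.isMaximal R

theorem isArtinian_quotient_maximalIdeal_pow_smul_top (M : Type*) [AddCommGroup M]
    [Module R M] [Module.Finite R M] (t : ℕ) :
    IsArtinian R (M ⧸ (maximalIdeal R ^ t • ⊤ : Submodule R M)) :=
  have := isArtinianRing_quotient_maximalIdeal_pow (R := R) t
  isArtinian_of_surjective_algebraMap (R := R ⧸ maximalIdeal R ^ t) Ideal.Quotient.mk_surjective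

end IsLocalRing

namespace IsPrecomplete

variable {R : Type*} [CommRing R] (I : Ideal R)

theorem of_surjective {M N : Type*} [AddCommGroup M] [Module R M] [AddCommGroup N] [Module R N]
    [IsPrecomplete I M] {f : M →ₗ[R] N} (hf : Function.Surjective f) : IsPrecomplete I N := by
  rw [← AdicCompletion.of_surjective_iff]
  intro y
  obtain ⟨x, rfl⟩ := AdicCompletion.map_surjective I hf y
  obtain ⟨m, rfl⟩ := AdicCompletion.of_surjective I M x
  exact ⟨f m, (AdicCompletion.map_of I f m).symm⟩

theorem pi {ι : Type*} [Finite ι] (M : ι → Type*) [∀ i, AddCommGroup (M i)]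
    [∀ i, Module R (M i)] [∀ i, IsPrecomplete I (M i)] : IsPrecomplete I (∀ i, M i) := by
  classical
  have := Fintype.ofFinite ι
  rw [← AdicCompletion.of_surjective_iff]
  intro x
  choose y hy using fun i ↦ AdicCompletion.of_surjective I (M i) (AdicCompletion.pi I M x i)
  refine ⟨y, (AdicCompletion.piEquivOfFintype I M).injective ?_⟩
  rw [AdicCompletion.piEquivOfFintype_apply, AdicCompletion.piEquivOfFintype_apply]
  funext i
  rw [← hy, AdicCompletion.pi, LinearMap.pi_apply, AdicCompletion.map_of, LinearMap.proj_apply]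

theorem exists_smodEq_of_smodEq_succ {M : Type*} [AddCommGroup M] [Module R M]
    [IsPrecomplete I M] {f : ℕ → M} (hf : ∀ t, f t ≡ f (t + 1) [SMOD (I ^ t • ⊤ : Submodule R M)]) :
    ∃ L : M, ∀ t, f t ≡ L [SMOD (I ^ t • ⊤ : Submodule R M)] := by
  refine IsPrecomplete.prec ‹_› fun {m n} hmn ↦ ?_
  induction n, hmn using Nat.le_induction with
  | base => rfl
  | succ n hmn ih =>
    exact ih.trans ((hf n).mono (Submodule.smul_mono_left (Ideal.pow_le_pow_right hmn)))

theorem of_finite [IsPrecomplete I R] (M : Type*) [AddCommGroup M] [Module R M]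
    [Module.Finite R M] : IsPrecomplete I M :=
  have ⟨n, _, hπ⟩ := Module.Finite.exists_fin' R M
  have := pi I fun _ : Fin n ↦ R
  of_surjective I hπ

end IsPrecomplete

namespace Submodule

variable {R M : Type*} [CommRing R] [AddCommGroup M] [Module R M]

theorem exists_sup_eq_biInf_sup {𝒩 : Set (Submodule R M)} (Q : Submodule R M)
    [IsArtinian R (M ⧸ Q)] (hne : 𝒩.Nonempty) (hinter : ∀ N₁ ∈ 𝒩, ∀ N₂ ∈ 𝒩, N₁ ⊓ N₂ ∈ 𝒩) :
    ∃ P ∈ 𝒩, P ⊔ Q = ⨅ N ∈ 𝒩, N ⊔ Q := by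
  obtain ⟨_, ⟨P, hP, rfl⟩, hmin⟩ := IsArtinian.set_has_minimal _ (hne.image (map Q.mkQ))
  refine ⟨P, hP, le_antisymm (le_iInf₂ fun N hN ↦ ?_) (iInf₂_le P hP)⟩
  have hPN : map Q.mkQ (P ⊓ N) = map Q.mkQ P :=
    (map_mono inf_le_left).eq_of_not_lt (hmin _ ⟨_, hinter P hP N hN, rfl⟩)
  rw [sup_comm, sup_comm N, ← comap_map_mkQ, ← comap_map_mkQ, ← hPN]
  exact comap_mono (map_mono inf_le_right)

variable (I : Ideal R)

theorem biInf_sup_pow_smul_top_eq {𝒩 : Set (Submodule R M)} {t : ℕ}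
    (hattained : ∃ P ∈ 𝒩, P ⊔ I ^ (t + 1) • ⊤ = ⨅ N ∈ 𝒩, N ⊔ I ^ (t + 1) • ⊤) :
    ⨅ N ∈ 𝒩, N ⊔ I ^ t • ⊤ = (⨅ N ∈ 𝒩, N ⊔ I ^ (t + 1) • ⊤) ⊔ I ^ t • ⊤ := by
  obtain ⟨P, hP, hPF⟩ := hattained
  have hpow : (I ^ (t + 1) • ⊤ : Submodule R M) ≤ I ^ t • ⊤ :=
    smul_mono_left (Ideal.pow_le_pow_right t.le_succ)
  refine le_antisymm ?_ (sup_le ?_ (le_iInf₂ fun _ _ ↦ le_sup_right))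
  · rw [← hPF, sup_assoc, sup_eq_right.mpr hpow]
    exact iInf₂_le P hP
  · exact le_iInf₂ fun N hN ↦ (iInf₂_le N hN).trans (sup_le_sup_left hpow N)

theorem iInf_sup_pow_smul_top (N : Submodule R M) [IsHausdorff I (M ⧸ N)] :
    ⨅ t : ℕ, (N ⊔ I ^ t • ⊤) = N := by
  refine le_antisymm (fun x hx ↦ ?_) (le_iInf fun _ ↦ le_sup_left)
  rw [← Quotient.mk_eq_zero]
  refine IsHausdorff.haus ‹_› _ fun t ↦ SModEq.zero.mpr ?_
  have hmap : map N.mkQ (I ^ t • ⊤) = (I ^ t • ⊤ : Submodule R (M ⧸ N)) := by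
    rw [map_smul'', map_top, range_mkQ]
  exact hmap ▸ (comap_map_mkQ N _).ge (mem_iInf _ |>.mp hx t)

theorem exists_seq_of_eq_succ_sup {F : ℕ → Submodule R M} (hF : ∀ t, F t = F (t + 1) ⊔ I ^ t • ⊤)
    {s : ℕ} {x : M} (hx : x ∈ F s) :
    ∃ f : ℕ → M, (∀ t, f t ∈ F t) ∧
      (∀ t, f t ≡ f (t + 1) [SMOD (I ^ t • ⊤ : Submodule R M)]) ∧ f s = x := by
  classical
  have hanti : Antitone F := antitone_nat_of_succ_le fun t ↦ (hF t).ge.trans' le_sup_left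
  have hnext (t) (y : M) (hy : y ∈ F t) :
      ∃ z ∈ F (t + 1), y ≡ z [SMOD (I ^ t • ⊤ : Submodule R M)] := by
    rw [hF t] at hy
    obtain ⟨z, hz, w, hw, rfl⟩ := mem_sup.mp hy
    exact ⟨z, hz, SModEq.sub_mem.mpr (by simpa using hw)⟩
  choose! next hnext_mem hnext_smodEq using hnext
  -- staying put whenever possible keeps the sequence at `x` up to index `s`
  let step (t : ℕ) (y : M) : M := if y ∈ F (t + 1) then y else next t y
  let f (n : ℕ) : M := Nat.rec (motive := fun _ ↦ M) x step n
  have hf_mem (t) : f t ∈ F t := by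
    induction t with
    | zero => exact hanti (Nat.zero_le s) hx
    | succ t ih =>
      change step t (f t) ∈ _
      unfold step
      split_ifs with h
      exacts [h, hnext_mem t _ ih]
  have hf_succ (t) : f t ≡ f (t + 1) [SMOD (I ^ t • ⊤ : Submodule R M)] := by
    change _ ≡ step t (f t) [SMOD _]
    unfold step
    split_ifs
    exacts [SModEq.refl _, hnext_smodEq t _ (hf_mem t)]
  have hf_eq (t) (ht : t ≤ s) : f t = x := by
    induction t with
    | zero => rfl
    | succ t ih =>
      change step t (f t) = x
      rw [ih (by omega)]
      exact if_pos (hanti ht hx)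
  exact ⟨f, hf_mem, hf_succ, hf_eq s le_rfl⟩

theorem le_iInf_sup_pow_smul_top [IsPrecomplete I M] {F : ℕ → Submodule R M}
    (hF : ∀ t, F t = F (t + 1) ⊔ I ^ t • ⊤) (s : ℕ) : F s ≤ (⨅ t, F t) ⊔ I ^ s • ⊤ := by
  intro x hx
  obtain ⟨f, hf_mem, hf_succ, rfl⟩ := exists_seq_of_eq_succ_sup I hF hx
  obtain ⟨L, hL⟩ := IsPrecomplete.exists_smodEq_of_smodEq_succ I hf_succ
  have hL_mem : L ∈ ⨅ t, F t := mem_iInf _ |>.mpr fun t ↦ by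
    have hpow : I ^ t • ⊤ ≤ F t := (hF t).ge.trans' le_sup_right
    simpa using (F t).sub_mem (hf_mem t) (hpow (SModEq.sub_mem.mp (hL t)))
  exact mem_sup.mpr ⟨L, hL_mem, f s - L, SModEq.sub_mem.mp (hL s), add_sub_cancel L (f s)⟩

end Submodule

/-- Chevalley's theorem for modules: let `(R, m)` be a complete local noetherian ring and `M`
a finitely generated `R`-module.  If `𝒩` is a nonempty collection of submodules of `M`
closed under finite intersections, with intersection `N`, then for every `s` there is
`N' ∈ 𝒩` with `N' ⊆ N + m^s M`. -/
theorem stmt18 (R : Type*) [CommRing R] [IsNoetherianRing R] [IsLocalRing R]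
    [IsAdicComplete (IsLocalRing.maximalIdeal R) R]
    (M : Type*) [AddCommGroup M] [Module R M] [Module.Finite R M]
    (𝒩 : Set (Submodule R M)) (hne : 𝒩.Nonempty)
    (hinter : ∀ N₁ ∈ 𝒩, ∀ N₂ ∈ 𝒩, N₁ ⊓ N₂ ∈ 𝒩) :
    ∀ s : ℕ, ∃ N' ∈ 𝒩,
      N' ≤ sInf 𝒩 ⊔ ((IsLocalRing.maximalIdeal R) ^ s • (⊤ : Submodule R M)) := by
  intro s
  have := IsPrecomplete.of_finite (maximalIdeal R) M
  let F (t : ℕ) : Submodule R M := ⨅ N ∈ 𝒩, N ⊔ maximalIdeal R ^ t • ⊤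
  have hattained (t : ℕ) : ∃ P ∈ 𝒩, P ⊔ maximalIdeal R ^ t • ⊤ = F t :=
    have := isArtinian_quotient_maximalIdeal_pow_smul_top (R := R) M t
    exists_sup_eq_biInf_sup (maximalIdeal R ^ t • ⊤) hne hinter
  have hF (t : ℕ) : F t = F (t + 1) ⊔ maximalIdeal R ^ t • ⊤ :=
    biInf_sup_pow_smul_top_eq _ (hattained (t + 1))
  have hlimit : ⨅ t, F t = sInf 𝒩 := by
    simp only [F, sInf_eq_iInf, iInf_comm (ι := ℕ), iInf_sup_pow_smul_top]
  obtain ⟨P, hP, hPF⟩ := hattained s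
  refine ⟨P, hP, ?_⟩
  calc P ≤ F s := hPF ▸ le_sup_left
    _ ≤ (⨅ t, F t) ⊔ maximalIdeal R ^ s • ⊤ := le_iInf_sup_pow_smul_top _ hF s
    _ = sInf 𝒩 ⊔ maximalIdeal R ^ s • ⊤ := by rw [hlimit]
end

section
/- Let k be a field of characteristic p, d ≥ 1 with p ≡ 1 (mod d), and write p − 1 = r d. Let i_1, …, i_n be positive integers with i_1 + ⋯ + i_n = d. If j_1, …, j_{n-1} are natural numbers with j_1 + ⋯ + j_{n-1} = r(d − i_n) and d·j_k < p·i_k for all 1 ≤ k ≤ n−1, then j_k = r·i_k for all k. Moreover, the multinomial coefficient (r(d − i_n))!/((r i_1)! ⋯ (r i_{n-1})!) is not divisible by p. -/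
/-!
With `p = r d + 1`, the bound `d j_k < p i_k = d (r i_k) + i_k ≤ d (r i_k + 1)` gives
`j_k ≤ r i_k`; both families sum to `r (d - i_n)`, so they agree termwise. The multinomial
coefficient divides `(r (d - i_n))!`, and `r (d - i_n) ≤ r d = p - 1 < p`, so it is prime to `p`.
-/

open Finset

theorem Nat.le_mul_of_mul_lt_succ_mul {d r a b : ℕ} (had : a ≤ d)
    (h : d * b < (r * d + 1) * a) : b ≤ r * a := by
  have : d * b < d * (r * a + 1) := by nlinarith
  exact Nat.lt_succ_iff.mp (Nat.lt_of_mul_lt_mul_left this)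

theorem Nat.Prime.not_dvd_multinomial {ι : Type*} {p : ℕ} (hp : p.Prime) (s : Finset ι)
    (f : ι → ℕ) (hlt : ∑ k ∈ s, f k < p) : ¬ p ∣ Nat.multinomial s f := fun hdvd =>
  have hfact : p ∣ (∑ k ∈ s, f k).factorial :=
    hdvd.trans (Dvd.intro_left _ (Nat.multinomial_spec s f))
  absurd ((hp.dvd_factorial).mp hfact) (Nat.not_le.mpr hlt)

theorem stmt19_general (p d r n : ℕ) (hp : p.Prime)
    (hr : p - 1 = r * d)
    (i : Fin (n + 1) → ℕ) (hisum : ∑ k, i k = d)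
    (j : Fin n → ℕ) (hjsum : ∑ k, j k = r * (d - i (Fin.last n)))
    (hjlt : ∀ k : Fin n, d * j k < p * i k.castSucc) :
    (∀ k : Fin n, j k = r * i k.castSucc) ∧
      ¬ p ∣ Nat.multinomial Finset.univ (fun k : Fin n => r * i k.castSucc) := by
  have hpeq : p = r * d + 1 := by have := hp.one_lt; omega
  have hinit : ∑ k : Fin n, i k.castSucc = d - i (Fin.last n) := by
    rw [← hisum, Fin.sum_univ_castSucc]; omega
  have hrsum : ∑ k : Fin n, r * i k.castSucc = r * (d - i (Fin.last n)) := by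
    rw [← mul_sum, hinit]
  have hik : ∀ k : Fin n, i k.castSucc ≤ d := fun k =>
    hisum ▸ single_le_sum (fun k _ => Nat.zero_le (i k)) (mem_univ _)
  have hle : ∀ k : Fin n, j k ≤ r * i k.castSucc := fun k =>
    Nat.le_mul_of_mul_lt_succ_mul (hik k) (hpeq ▸ hjlt k)
  have heq : ∀ k : Fin n, j k = r * i k.castSucc := fun k =>
    (sum_eq_sum_iff_of_le fun k _ => hle k).mp (hjsum.trans hrsum.symm) k (mem_univ k)
  refine ⟨heq, hp.not_dvd_multinomial _ _ ?_⟩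
  calc ∑ k : Fin n, r * i k.castSucc = r * (d - i (Fin.last n)) := hrsum
    _ ≤ r * d := Nat.mul_le_mul_left r (Nat.sub_le _ _)
    _ < p := by omega

/-- Let `p` be a prime with `p ≡ 1 (mod d)`, `d ≥ 1`, `p - 1 = r * d`.  Let
`i : Fin (n+1) → ℕ` be positive with `∑ i = d`.  If `j : Fin n → ℕ` satisfies
`∑ j = r * (d - i_last)` and `d * j k < p * i k` for all `k : Fin n` (`i k` meaning
`i (k.castSucc)`), then `j k = r * i k` for all such `k`; moreover the multinomial
coefficient `(r (d - i_last))! / ∏ (r * i k)!` is not divisible by `p`. -/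
theorem stmt19 (p d r n : ℕ) (hp : p.Prime) (hd : 1 ≤ d) (hmod : p % d = 1)
    (hr : p - 1 = r * d)
    (i : Fin (n + 1) → ℕ) (hipos : ∀ k, 0 < i k) (hisum : ∑ k, i k = d)
    (j : Fin n → ℕ) (hjsum : ∑ k, j k = r * (d - i (Fin.last n)))
    (hjlt : ∀ k : Fin n, d * j k < p * i k.castSucc) :
    (∀ k : Fin n, j k = r * i k.castSucc) ∧
      ¬ p ∣ Nat.multinomial Finset.univ (fun k : Fin n => r * i k.castSucc) :=
  stmt19_general p d r n hp hr i hisum j hjsum hjlt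
end
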